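/- Let $p$ be an odd prime, $n \ge 1$, $q = (p^n - 1)/2$, and $0 \le k < m \le n$. The subgroup $\{(a,b) \in \mathbb{Z} \times (\{1,\dots,q\} \to \mathbb{Z}) : a + 2\sum_{i : p^k \mid i} b_i = 0 \text{ and } a + 2\sum_{i : p^m \mid i} b_i = 0\}$ equals the subgroup generated by: the elements $(2, -\delta_i)$ for $i \in \{1,\dots,q\}$ with $p^m \mid i$; the elements $(0, \delta_j)$ for $j \in \{1,\dots,q\}$ with $p^k \nmid j$; and the elements $(0, \delta_{p^k} - \delta_\ell)$ for $\ell \in \{1,\dots,q\}$ with $\ell > p^k$, $p^k \mid \ell$ and $p^m \nmid \ell$. Here $\delta_i$ denotes the function that is $1$ at $i$ and $0$ elsewhere. -/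

import Mathlib

def delta (q t : ℕ) : {i : ℕ // i ∈ Finset.Icc 1 q} → ℤ :=
  fun i => if (i : ℕ) = t then 1 else 0

lemma sum_mul_delta (q : ℕ) (s : Finset {i : ℕ // i ∈ Finset.Icc 1 q})
    (c : {i : ℕ // i ∈ Finset.Icc 1 q} → ℤ) (t : {i : ℕ // i ∈ Finset.Icc 1 q}) :
    ∑ i ∈ s, c i * delta q (i : ℕ) t = if t ∈ s then c t else 0 := by
  simp only [delta, Subtype.coe_inj, mul_ite, mul_one, mul_zero]
  exact Finset.sum_ite_eq s t c

lemma sum_delta_mem (q : ℕ) (s : Finset {i : ℕ // i ∈ Finset.Icc 1 q})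
    (t : {i : ℕ // i ∈ Finset.Icc 1 q}) :
    ∑ i ∈ s, delta q (t : ℕ) i = if t ∈ s then 1 else 0 := by
  simp only [delta, Subtype.coe_inj]
  exact Finset.sum_ite_eq' s t 1

lemma sum_delta_nat (q : ℕ) (s : Finset {i : ℕ // i ∈ Finset.Icc 1 q}) (t : ℕ)
    (ht : t ∈ Finset.Icc 1 q) :
    ∑ i ∈ s, delta q t i = if ⟨t, ht⟩ ∈ s then 1 else 0 :=
  sum_delta_mem q s ⟨t, ht⟩

def ncap (q a b : ℕ) : AddSubgroup (ℤ × ({i : ℕ // i ∈ Finset.Icc 1 q} → ℤ)) where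
  carrier := {x : ℤ × ({i : ℕ // i ∈ Finset.Icc 1 q} → ℤ) |
        x.1 + 2 * ∑ i ∈ Finset.univ.filter (fun i : {i : ℕ // i ∈ Finset.Icc 1 q} =>
          a ∣ (i : ℕ)), x.2 i = 0 ∧
        x.1 + 2 * ∑ i ∈ Finset.univ.filter (fun i : {i : ℕ // i ∈ Finset.Icc 1 q} =>
          b ∣ (i : ℕ)), x.2 i = 0}
  zero_mem' := by simp
  add_mem' := by
    intro x y hx hy
    obtain ⟨hx1, hx2⟩ := hx
    obtain ⟨hy1, hy2⟩ := hy
    constructor <;>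
    · simp only [Prod.fst_add, Prod.snd_add, Pi.add_apply, Finset.sum_add_distrib]
      ring_nf
      ring_nf at hx1 hx2 hy1 hy2
      linarith
  neg_mem' := by
    intro x hx
    obtain ⟨hx1, hx2⟩ := hx
    constructor <;>
    · simp only [Prod.fst_neg, Prod.snd_neg, Pi.neg_apply, Finset.sum_neg_distrib]
      linarith

/-- For `p` an odd prime, `n ≥ 1`, `q = (pⁿ - 1)/2` and `k < m ≤ n`, the subgroup
`{(a,b) : a + 2∑_{pᵏ ∣ i} bᵢ = 0 and a + 2∑_{pᵐ ∣ i} bᵢ = 0}` of `ℤ × ({1,…,q} → ℤ)`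
equals the subgroup generated by the elements `(2, -δᵢ)` for `pᵐ ∣ i`, the elements
`(0, δⱼ)` for `pᵏ ∤ j`, and the elements `(0, δ_{pᵏ} - δ_ℓ)` for `ℓ > pᵏ`, `pᵏ ∣ ℓ`,
`pᵐ ∤ ℓ`. -/
theorem stmt_7 (p n : ℕ) (hp : p.Prime) (hodd : Odd p) (hn : 1 ≤ n)
    (q : ℕ) (hq : q = (p ^ n - 1) / 2) (k m : ℕ) (hkm : k < m) (hm : m ≤ n) :
    {x : ℤ × ({i : ℕ // i ∈ Finset.Icc 1 q} → ℤ) |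
        x.1 + 2 * ∑ i ∈ Finset.univ.filter (fun i : {i : ℕ // i ∈ Finset.Icc 1 q} =>
          p ^ k ∣ (i : ℕ)), x.2 i = 0 ∧
        x.1 + 2 * ∑ i ∈ Finset.univ.filter (fun i : {i : ℕ // i ∈ Finset.Icc 1 q} =>
          p ^ m ∣ (i : ℕ)), x.2 i = 0} =
      (AddSubgroup.closure
        ({x : ℤ × ({i : ℕ // i ∈ Finset.Icc 1 q} → ℤ) |
            ∃ i : {i : ℕ // i ∈ Finset.Icc 1 q}, p ^ m ∣ (i : ℕ) ∧
              x = ((2 : ℤ), -delta q (i : ℕ))} ∪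
         {x : ℤ × ({i : ℕ // i ∈ Finset.Icc 1 q} → ℤ) |
            ∃ j : {i : ℕ // i ∈ Finset.Icc 1 q}, ¬ p ^ k ∣ (j : ℕ) ∧
              x = ((0 : ℤ), delta q (j : ℕ))} ∪
         {x : ℤ × ({i : ℕ // i ∈ Finset.Icc 1 q} → ℤ) |
            ∃ l : {i : ℕ // i ∈ Finset.Icc 1 q}, p ^ k < (l : ℕ) ∧ p ^ k ∣ (l : ℕ) ∧
              ¬ p ^ m ∣ (l : ℕ) ∧
              x = ((0 : ℤ), delta q (p ^ k) - delta q (l : ℕ))}) : Set _) := by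
  classical
  set α := {i : ℕ // i ∈ Finset.Icc 1 q} with hα
  -- basic numerology
  have hp3 : 3 ≤ p := by
    have hne : p ≠ 2 := by rintro rfl; exact absurd hodd (by decide)
    have := hp.two_le
    omega
  have hdvdkm : p ^ k ∣ p ^ m := pow_dvd_pow p hkm.le
  have hklt : p ^ k < p ^ m := Nat.pow_lt_pow_right hp.one_lt hkm
  have hpkq : p ^ k ≤ q := by
    have h1 : p ^ k ≤ p ^ (n - 1) := Nat.pow_le_pow_right hp.pos (by omega)
    have h2 : p ^ (n - 1) * p = p ^ n := by
      rw [← pow_succ]; congr 1; omega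
    have h3 : 1 ≤ p ^ (n - 1) := Nat.one_le_pow _ _ hp.pos
    have h5 : p ^ (n - 1) * 3 ≤ p ^ (n - 1) * p := Nat.mul_le_mul_left _ hp3
    have h4 : p ^ k * 2 ≤ p ^ n - 1 := by omega
    rw [hq]
    exact (Nat.le_div_iff_mul_le (by norm_num)).mpr h4
  have hpik : p ^ k ∈ Finset.Icc 1 q := by
    rw [Finset.mem_Icc]
    exact ⟨Nat.one_le_pow _ _ hp.pos, hpkq⟩
  set π : α := ⟨p ^ k, hpik⟩ with hπ
  set S := ({x : ℤ × (α → ℤ) |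
            ∃ i : α, p ^ m ∣ (i : ℕ) ∧ x = ((2 : ℤ), -delta q (i : ℕ))} ∪
         {x : ℤ × (α → ℤ) |
            ∃ j : α, ¬ p ^ k ∣ (j : ℕ) ∧ x = ((0 : ℤ), delta q (j : ℕ))} ∪
         {x : ℤ × (α → ℤ) |
            ∃ l : α, p ^ k < (l : ℕ) ∧ p ^ k ∣ (l : ℕ) ∧ ¬ p ^ m ∣ (l : ℕ) ∧
              x = ((0 : ℤ), delta q (p ^ k) - delta q (l : ℕ))}) with hS
  have hKfilter : ∀ (d : ℕ) (t : α),
      (t ∈ Finset.univ.filter (fun i : α => d ∣ (i : ℕ))) ↔ d ∣ (t : ℕ) := by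
    intro d t; simp
  apply Set.Subset.antisymm
  · -- hard direction
    rintro ⟨a, b⟩ ⟨h1, h2⟩
    simp only [Set.mem_setOf_eq] at h1 h2
    set K := Finset.univ.filter (fun i : α => p ^ k ∣ (i : ℕ)) with hK
    set A := Finset.univ.filter (fun i : α => p ^ m ∣ (i : ℕ)) with hA
    set B := Finset.univ.filter (fun i : α => ¬ p ^ k ∣ (i : ℕ)) with hB
    set C := Finset.univ.filter
      (fun i : α => p ^ k < (i : ℕ) ∧ p ^ k ∣ (i : ℕ) ∧ ¬ p ^ m ∣ (i : ℕ)) with hC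
    have hAK : A ⊆ K := by
      intro t ht
      rw [hA, Finset.mem_filter] at ht
      rw [hK, Finset.mem_filter]
      exact ⟨ht.1, dvd_trans hdvdkm ht.2⟩
    have hKA : K \ A = insert π C := by
      ext t
      simp only [Finset.mem_sdiff, hK, hA, hC, Finset.mem_filter, Finset.mem_univ,
        true_and, Finset.mem_insert]
      constructor
      · rintro ⟨hdk, hdm⟩
        rcases Nat.lt_or_ge (p ^ k) (t : ℕ) with hlt | hge
        · exact Or.inr ⟨hlt, hdk, hdm⟩
        · left
          have h1t : 1 ≤ (t : ℕ) := (Finset.mem_Icc.mp t.2).1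
          have hle : p ^ k ≤ (t : ℕ) := Nat.le_of_dvd (by omega) hdk
          have heq : (t : ℕ) = p ^ k := by omega
          exact Subtype.ext heq
      · rintro (rfl | ⟨_, hdk, hdm⟩)
        · refine ⟨dvd_rfl, ?_⟩
          intro hd
          exact absurd (Nat.le_of_dvd (Nat.pow_pos hp.pos) hd) (by omega)
        · exact ⟨hdk, hdm⟩
    have hπC : π ∉ C := by
      rw [hC, Finset.mem_filter]
      push_neg
      intro _
      intro h
      exact absurd h (by simp [hπ])
    have hFact : b π + ∑ l ∈ C, b l = 0 := by
      have hsub : ∑ i ∈ K \ A, b i = ∑ i ∈ K, b i - ∑ i ∈ A, b i :=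
        Finset.sum_sdiff_eq_sub hAK
      rw [hKA, Finset.sum_insert hπC] at hsub
      have : ∑ i ∈ K, b i = ∑ i ∈ A, b i := by linarith
      linarith [hsub, this]
    -- the decomposition
    have hdecomp : ((a, b) : ℤ × (α → ℤ)) =
        (∑ i ∈ A, (-b i) • ((2 : ℤ), -delta q (i : ℕ)))
        + (∑ j ∈ B, (b j) • ((0 : ℤ), delta q (j : ℕ)))
        + (∑ l ∈ C, (-b l) • ((0 : ℤ), delta q (p ^ k) - delta q (l : ℕ))) := by
      apply Prod.ext
      · simp only [Prod.fst_add, Prod.fst_sum, Prod.smul_fst, smul_eq_mul,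
          mul_zero, Finset.sum_const_zero, add_zero]
        have hthis : ∑ i ∈ A, (-b i) * 2 = -2 * ∑ i ∈ A, b i := by
          rw [Finset.mul_sum]
          exact Finset.sum_congr rfl (fun i _ => by ring)
        linarith [hthis]
      · funext t
        simp only [Prod.snd_add, Prod.snd_sum, Prod.smul_snd, Pi.add_apply,
          Finset.sum_apply, Pi.smul_apply, smul_eq_mul, Pi.neg_apply, Pi.sub_apply]
        have e1 : ∑ i ∈ A, (-b i) * (-(delta q (i : ℕ) t)) = if t ∈ A then b t else 0 := by
          rw [← sum_mul_delta q A b t]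
          exact Finset.sum_congr rfl (fun i _ => by ring)
        have e2 : ∑ j ∈ B, (b j) * (delta q (j : ℕ) t) = if t ∈ B then b t else 0 :=
          sum_mul_delta q B b t
        have e3 : ∑ l ∈ C, (-b l) * (delta q (p ^ k) t - delta q (l : ℕ) t)
            = (-(b π + ∑ l ∈ C, b l) + b π) * delta q (p ^ k) t
              + (if t ∈ C then b t else 0) := by
          have h' : ∀ l ∈ C, (-b l) * (delta q (p ^ k) t - delta q (l : ℕ) t)
              = (-b l) * delta q (p ^ k) t + b l * delta q (l : ℕ) t := by
            intro l _; ring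
          rw [Finset.sum_congr rfl h', Finset.sum_add_distrib,
            sum_mul_delta q C b t, ← Finset.sum_mul, Finset.sum_neg_distrib]
          ring
        rw [e1, e2, e3, hFact]
        simp only [neg_zero, zero_add]
        have hδπ : delta q (p ^ k) t = if t = π then 1 else 0 := by
          by_cases h : t = π
          · subst h; simp [delta, hπ]
          · have hne : (t : ℕ) ≠ p ^ k := fun hh => h (Subtype.ext hh)
            simp [delta, hne, h]
        rw [hδπ]
        have hπm : ¬ p ^ m ∣ (π : ℕ) := by
          intro h
          have := Nat.le_of_dvd (Nat.pow_pos hp.pos) h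
          have hπk : (π : ℕ) = p ^ k := rfl
          omega
        have hπA : π ∉ A := by
          rw [hA, Finset.mem_filter]; push_neg; intro _; exact hπm
        have hπB : π ∉ B := by
          rw [hB, Finset.mem_filter]; push_neg; intro _; exact dvd_rfl
        by_cases htπ : t = π
        · rw [htπ]
          simp [hπA, hπB, hπC]
        · simp only [htπ, if_false, mul_zero, add_zero]
          have h1t : 1 ≤ (t : ℕ) := (Finset.mem_Icc.mp t.2).1
          by_cases hdm : p ^ m ∣ (t : ℕ)
          · have htA : t ∈ A := by rw [hA, Finset.mem_filter]; exact ⟨Finset.mem_univ _, hdm⟩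
            have htB : t ∉ B := by
              rw [hB, Finset.mem_filter]
              push_neg
              intro _
              exact dvd_trans hdvdkm hdm
            have htC : t ∉ C := by
              rw [hC, Finset.mem_filter]
              push_neg
              intro _ _ _
              exact hdm
            simp [htA, htB, htC]
          · by_cases hdk : p ^ k ∣ (t : ℕ)
            · have hlt : p ^ k < (t : ℕ) := by
                have hle : p ^ k ≤ (t : ℕ) := Nat.le_of_dvd (by omega) hdk
                rcases Nat.lt_or_ge (p ^ k) (t : ℕ) with h | h
                · exact h
                · exact absurd (Subtype.ext (by omega : (t : ℕ) = p ^ k)) htπ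
              have htA : t ∉ A := by
                rw [hA, Finset.mem_filter]; push_neg; intro _; exact hdm
              have htB : t ∉ B := by
                rw [hB, Finset.mem_filter]; push_neg; intro _; exact hdk
              have htC : t ∈ C := by
                rw [hC, Finset.mem_filter]
                exact ⟨Finset.mem_univ _, hlt, hdk, hdm⟩
              simp [htA, htB, htC]
            · have htA : t ∉ A := by
                rw [hA, Finset.mem_filter]; push_neg; intro _; exact hdm
              have htB : t ∈ B := by
                rw [hB, Finset.mem_filter]; exact ⟨Finset.mem_univ _, hdk⟩
              have htC : t ∉ C := by
                rw [hC, Finset.mem_filter]; push_neg; intro _ _ h; exact absurd h hdk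
              simp [htA, htB, htC]
    rw [hdecomp]
    refine AddSubgroup.add_mem _ (AddSubgroup.add_mem _ ?_ ?_) ?_
    · apply AddSubgroup.sum_mem
      intro i hi
      apply AddSubgroup.zsmul_mem
      apply AddSubgroup.subset_closure
      rw [hA, Finset.mem_filter] at hi
      exact Or.inl (Or.inl ⟨i, hi.2, rfl⟩)
    · apply AddSubgroup.sum_mem
      intro j hj
      apply AddSubgroup.zsmul_mem
      apply AddSubgroup.subset_closure
      rw [hB, Finset.mem_filter] at hj
      exact Or.inl (Or.inr ⟨j, hj.2, rfl⟩)
    · apply AddSubgroup.sum_mem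
      intro l hl
      apply AddSubgroup.zsmul_mem
      apply AddSubgroup.subset_closure
      rw [hC, Finset.mem_filter] at hl
      exact Or.inr ⟨l, hl.2.1, hl.2.2.1, hl.2.2.2, rfl⟩
  · -- easy direction: generators satisfy the equations
    intro x hx
    have key : AddSubgroup.closure S ≤ ncap q (p ^ k) (p ^ m) := by
      refine (AddSubgroup.closure_le (ncap q (p ^ k) (p ^ m))).mpr ?_
      rintro y ((⟨i, hdi, rfl⟩ | ⟨j, hdj, rfl⟩) | ⟨l, hlt, hdkl, hdml, rfl⟩)
      · constructor <;>
        · show (2 : ℤ) + 2 * ∑ t ∈ _, (-delta q (i : ℕ)) t = 0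
          simp only [Pi.neg_apply, Finset.sum_neg_distrib, sum_delta_mem]
          rw [if_pos]
          · ring
          · rw [Finset.mem_filter]
            refine ⟨Finset.mem_univ _, ?_⟩
            first
            | exact dvd_trans hdvdkm hdi
            | exact hdi
      · constructor <;>
        · show (0 : ℤ) + 2 * ∑ t ∈ _, delta q (j : ℕ) t = 0
          rw [sum_delta_mem, if_neg]
          · ring
          · rw [Finset.mem_filter]
            push_neg
            intro _
            first
            | exact hdj
            | exact fun h => hdj (dvd_trans hdvdkm h)
      · constructor
        · show (0 : ℤ) + 2 * ∑ t ∈ _, (delta q (p ^ k) - delta q (l : ℕ)) t = 0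
          simp only [Pi.sub_apply, Finset.sum_sub_distrib]
          rw [sum_delta_nat q _ (p ^ k) hpik, sum_delta_mem, if_pos, if_pos]
          · ring
          · rw [Finset.mem_filter]; exact ⟨Finset.mem_univ _, hdkl⟩
          · rw [Finset.mem_filter]; exact ⟨Finset.mem_univ _, dvd_rfl⟩
        · show (0 : ℤ) + 2 * ∑ t ∈ _, (delta q (p ^ k) - delta q (l : ℕ)) t = 0
          simp only [Pi.sub_apply, Finset.sum_sub_distrib]
          rw [sum_delta_nat q _ (p ^ k) hpik, sum_delta_mem, if_neg, if_neg]
          · ring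
          · rw [Finset.mem_filter]
            push_neg
            intro _
            exact hdml
          · rw [Finset.mem_filter]
            push_neg
            intro _ h
            exact absurd (Nat.le_of_dvd (Nat.pow_pos hp.pos) h) (by omega)
    exact key hx
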